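/- arXiv:1910.09618 — 2 statements merged into one kernel-verified Lean document; each statement's English description precedes it below -/
import Mathlib

section
/- Let z_λ denote the slack variable in an optimizer (J_λ, z_λ) of the unbalanced transport cost C_{λ,p}(x,y). Then ‖z_λ‖_p is monotone nonincreasing in λ: if 0 ≤ λ_1 < λ_2, and (J_1, z_1), (J_2, z_2) are optimizers for C_{λ_1,p}(x,y) and C_{λ_2,p}(x,y) respectively, then ‖z_2‖_p ≤ ‖z_1‖_p. -/
open Finset

variable {V E : Type*} [Fintype V] [Fintype E] [DecidableEq V]

/-- The divergence `Pᵀ J` of an edge flow on a graph given by the incidence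
structure `src, tgt : E → V`. -/
def div' (src tgt : E → V) (J : E → ℝ) (v : V) : ℝ :=
  (∑ e, if tgt e = v then J e else 0) - ∑ e, if src e = v then J e else 0

/-- The vector `p`-norm on `V → ℝ`. -/
noncomputable def pnorm (p : ℝ) (z : V → ℝ) : ℝ := (∑ v, |z v| ^ p) ^ (1 / p)

/-- The unbalanced transport cost `C_{λ,p}(x,y)`:
minimize `‖J‖₁ + λ‖z‖_p` subject to `Pᵀ J = y - x + z`. -/
noncomputable def Cunb (src tgt : E → V) (lam p : ℝ) (x y : V → ℝ) : ℝ :=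
  sInf {c : ℝ | ∃ (J : E → ℝ) (z : V → ℝ),
    (∀ v, div' src tgt J v = y v - x v + z v) ∧
    c = (∑ e, |J e|) + lam * pnorm p z}


/-- A pair `(J, z)` is an optimizer for `C_{λ,p}(x,y)` if it is feasible and
attains the minimum. -/
def IsOptimizer (src tgt : E → V) (lam p : ℝ) (x y : V → ℝ)
    (J : E → ℝ) (z : V → ℝ) : Prop :=
  (∀ v, div' src tgt J v = y v - x v + z v) ∧
  (∑ e, |J e|) + lam * pnorm p z = Cunb src tgt lam p x y

/-! Testing each optimizer against the other one gives the two exchange inequalities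
`‖J₁‖₁ + λ₁‖z₁‖_p ≤ ‖J₂‖₁ + λ₁‖z₂‖_p` and `‖J₂‖₁ + λ₂‖z₂‖_p ≤ ‖J₁‖₁ + λ₂‖z₁‖_p`.
Their sum is `(λ₂ - λ₁)(‖z₂‖_p - ‖z₁‖_p) ≤ 0`. -/

omit [DecidableEq V] in
lemma pnorm_nonneg (p : ℝ) (z : V → ℝ) : 0 ≤ pnorm p z :=
  Real.rpow_nonneg (sum_nonneg fun _ _ => Real.rpow_nonneg (abs_nonneg _) _) _

lemma Cunb_le_of_feasible (src tgt : E → V) {lam : ℝ} (p : ℝ) (hlam : 0 ≤ lam)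
    {x y : V → ℝ} {J : E → ℝ} {z : V → ℝ}
    (hf : ∀ v, div' src tgt J v = y v - x v + z v) :
    Cunb src tgt lam p x y ≤ (∑ e, |J e|) + lam * pnorm p z := by
  refine csInf_le ⟨0, ?_⟩ ⟨J, z, hf, rfl⟩
  rintro _ ⟨J', z', -, rfl⟩
  have := mul_nonneg hlam (pnorm_nonneg p z')
  positivity

lemma IsOptimizer.cost_le_of_feasible {src tgt : E → V} {lam p : ℝ} {x y : V → ℝ}
    {J J' : E → ℝ} {z z' : V → ℝ} (hopt : IsOptimizer src tgt lam p x y J z)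
    (hlam : 0 ≤ lam) (hf : ∀ v, div' src tgt J' v = y v - x v + z' v) :
    (∑ e, |J e|) + lam * pnorm p z ≤ (∑ e, |J' e|) + lam * pnorm p z' :=
  hopt.2 ▸ Cunb_le_of_feasible src tgt p hlam hf

lemma le_of_exchange_of_lt {a₁ a₂ b₁ b₂ lam₁ lam₂ : ℝ} (h₁₂ : lam₁ < lam₂)
    (hex₁ : a₁ + lam₁ * b₁ ≤ a₂ + lam₁ * b₂) (hex₂ : a₂ + lam₂ * b₂ ≤ a₁ + lam₂ * b₁) :
    b₂ ≤ b₁ := by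
  have hprod : (lam₂ - lam₁) * (b₂ - b₁) ≤ 0 := by linarith
  by_contra! hlt
  exact hprod.not_gt (mul_pos (sub_pos.2 h₁₂) (sub_pos.2 hlt))

theorem pnorm_slack_antitone_in_lambda_general (src tgt : E → V) (p : ℝ)
    (lam₁ lam₂ : ℝ) (h₁ : 0 ≤ lam₁) (h₁₂ : lam₁ < lam₂) (x y : V → ℝ)
    (J₁ J₂ : E → ℝ) (z₁ z₂ : V → ℝ)
    (h1 : IsOptimizer src tgt lam₁ p x y J₁ z₁)
    (h2 : IsOptimizer src tgt lam₂ p x y J₂ z₂) :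
    pnorm p z₂ ≤ pnorm p z₁ :=
  le_of_exchange_of_lt h₁₂ (h1.cost_le_of_feasible h₁ h2.1)
    (h2.cost_le_of_feasible (h₁.trans h₁₂.le) h1.1)

/-- The `p`-norm of the slack variable in an optimizer of `C_{λ,p}` is
monotone nonincreasing in `λ`. -/
theorem pnorm_slack_antitone_in_lambda (src tgt : E → V) (p : ℝ) (hp : 1 ≤ p)
    (lam₁ lam₂ : ℝ) (h₁ : 0 ≤ lam₁) (h₁₂ : lam₁ < lam₂) (x y : V → ℝ)
    (hx : ∀ v, 0 ≤ x v) (hy : ∀ v, 0 ≤ y v)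
    (J₁ J₂ : E → ℝ) (z₁ z₂ : V → ℝ)
    (h1 : IsOptimizer src tgt lam₁ p x y J₁ z₁)
    (h2 : IsOptimizer src tgt lam₂ p x y J₂ z₂) :
    pnorm p z₂ ≤ pnorm p z₁ :=
  pnorm_slack_antitone_in_lambda_general src tgt p lam₁ lam₂ h₁ h₁₂ x y J₁ J₂ z₁ z₂ h1 h2
end

section
/- Let G be a connected graph and let x, y be probability distributions on V (i.e., balanced, with equal total mass 1). If λ ≥ diam(G)/2, then the unbalanced cost with p = 1 coincides with the Wasserstein distance: C_{λ,1}(x,y) = W_1(x,y). -/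
open Finset

variable {V : Type*} [Fintype V] [DecidableEq V]

/-- Beckmann formulation of the Wasserstein-1 distance on a simple graph:
a flow is an antisymmetric function on ordered pairs of vertices, supported on
edges; its cost is half the sum of absolute values (each edge counted twice),
and its divergence at `v` is the net inflow `∑ w, J w v`. -/
noncomputable def W1sg (G : SimpleGraph V) (x y : V → ℝ) : ℝ :=
  sInf {c : ℝ | ∃ J : V → V → ℝ,
    (∀ v w, J v w = - J w v) ∧
    (∀ v w, ¬ G.Adj v w → J v w = 0) ∧
    (∀ v, ∑ w, J w v = y v - x v) ∧
    c = (1 / 2) * ∑ v, ∑ w, |J v w|}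

/-- The unbalanced transport cost `C_{λ,1}` on a simple graph: a slack
variable `z` allows mass to be created or destroyed at each vertex at cost
`λ` per unit. -/
noncomputable def Cunbsg (G : SimpleGraph V) (lam : ℝ) (x y : V → ℝ) : ℝ :=
  sInf {c : ℝ | ∃ (J : V → V → ℝ) (z : V → ℝ),
    (∀ v w, J v w = - J w v) ∧
    (∀ v w, ¬ G.Adj v w → J v w = 0) ∧
    (∀ v, ∑ w, J w v = y v - x v + z v) ∧
    c = (1 / 2) * (∑ v, ∑ w, |J v w|) + lam * ∑ v, |z v|}

/-- `x` is a probability distribution on `V`. -/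
def IsProb (x : V → ℝ) : Prop := (∀ v, 0 ≤ x v) ∧ ∑ v, x v = 1

/-!
A pair `(J, z)` feasible for `C_{λ,1}` has `∑ z = 0`, because a flow has total divergence zero
and `x`, `y` have equal mass. The slack is then absorbed by a flow `K` of divergence `-z`: couple
the deficit `z⁻` with the excess `z⁺` by the product coupling and route every pair along a
shortest walk, of length at most `diam G`. Since `∑ z⁺ = ∑ z⁻ = ‖z‖₁ / 2`, the flow `K` costs at
most `diam G / 2 · ‖z‖₁ ≤ λ ‖z‖₁`, so `J + K` is feasible for `W₁` at no greater cost.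
Conversely a flow feasible for `W₁` is feasible for `C_{λ,1}` with `z = 0`.
-/

section Flows

variable {α : Type*}

def SimpleGraph.flows (G : SimpleGraph α) : Submodule ℝ (α → α → ℝ) where
  carrier := {J | (∀ v w, J v w = -J w v) ∧ ∀ v w, ¬G.Adj v w → J v w = 0}
  add_mem' hJ hK :=
    ⟨fun v w => by simp [hJ.1 v w, hK.1 v w, add_comm],
      fun v w h => by simp [hJ.2 v w h, hK.2 v w h]⟩
  zero_mem' := ⟨fun _ _ => by simp, fun _ _ _ => rfl⟩
  smul_mem' c J hJ := ⟨fun v w => by simp [hJ.1 v w], fun v w h => by simp [hJ.2 v w h]⟩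

section Walk

variable [DecidableEq α] {G : SimpleGraph α}

def dartFlow (u v : α) : α → α → ℝ := fun r s =>
  (if r = u ∧ s = v then 1 else 0) - (if r = v ∧ s = u then 1 else 0)

theorem SimpleGraph.Adj.dartFlow_mem_flows {u v : α} (h : G.Adj u v) : dartFlow u v ∈ G.flows := by
  refine ⟨fun r s => ?_, fun r s hrs => ?_⟩
  · simp only [dartFlow, and_comm (a := s = _)]
    ring
  · have h₁ : ¬(r = u ∧ s = v) := by rintro ⟨rfl, rfl⟩; exact hrs h
    have h₂ : ¬(r = v ∧ s = u) := by rintro ⟨rfl, rfl⟩; exact hrs h.symm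
    simp [dartFlow, h₁, h₂]

def SimpleGraph.Walk.flow : ∀ {a b : α}, G.Walk a b → α → α → ℝ
  | _, _, nil => 0
  | _, _, cons (u := u) (v := v) _ p => dartFlow u v + p.flow

theorem SimpleGraph.Walk.flow_mem_flows {a b : α} (p : G.Walk a b) : p.flow ∈ G.flows := by
  induction p with
  | nil => exact zero_mem _
  | cons h p ih => exact add_mem h.dartFlow_mem_flows ih

end Walk

section Fintype

variable [Fintype α]

def divergence : (α → α → ℝ) →ₗ[ℝ] α → ℝ where
  toFun J v := ∑ w, J w v
  map_add' J K := by ext v; simp [sum_add_distrib]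
  map_smul' c J := by ext v; simp [mul_sum]

@[simp] theorem divergence_apply (J : α → α → ℝ) (v : α) : divergence J v = ∑ w, J w v := rfl

theorem sum_divergence_eq_zero {J : α → α → ℝ} (hJ : ∀ v w, J v w = -J w v) :
    ∑ v, divergence J v = 0 := by
  have h : ∑ v, divergence J v = -∑ v, divergence J v := calc
    ∑ v, divergence J v = ∑ w, ∑ v, J w v := sum_comm
    _ = ∑ w, ∑ v, -J v w := sum_congr rfl fun w _ => sum_congr rfl fun v _ => hJ w v
    _ = -∑ v, divergence J v := by simp [sum_neg_distrib]
  linarith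

noncomputable def flowCost (J : α → α → ℝ) : ℝ := (1 / 2) * ∑ v, ∑ w, |J v w|

theorem flowCost_nonneg (J : α → α → ℝ) : 0 ≤ flowCost J := by
  unfold flowCost; positivity

theorem flowCost_add_le (J K : α → α → ℝ) : flowCost (J + K) ≤ flowCost J + flowCost K := by
  simp only [flowCost, ← mul_add, ← sum_add_distrib]
  gcongr with v _ w _
  exact abs_add_le _ _

theorem flowCost_smul (c : ℝ) (J : α → α → ℝ) : flowCost (c • J) = |c| * flowCost J := by
  simp only [flowCost, Pi.smul_apply, smul_eq_mul, abs_mul, ← mul_sum]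
  ring

theorem flowCost_sum_le {ι : Type*} (s : Finset ι) (J : ι → α → α → ℝ) :
    flowCost (∑ i ∈ s, J i) ≤ ∑ i ∈ s, flowCost (J i) :=
  le_sum_of_subadditive flowCost (by simp [flowCost]) flowCost_add_le s J

variable {G : SimpleGraph α} {x y z : α → ℝ} {J : α → α → ℝ} {lam : ℝ}

theorem W1sg_le_flowCost (hJ : J ∈ G.flows) (hdiv : divergence J = y - x) :
    W1sg G x y ≤ flowCost J :=
  csInf_le ⟨0, by rintro _ ⟨K, -, -, -, rfl⟩; exact flowCost_nonneg K⟩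
    ⟨J, hJ.1, hJ.2, fun v => congrFun hdiv v, rfl⟩

theorem le_W1sg {a : ℝ} (hne : ∃ J ∈ G.flows, divergence J = y - x)
    (h : ∀ J ∈ G.flows, divergence J = y - x → a ≤ flowCost J) : a ≤ W1sg G x y := by
  obtain ⟨J, hJ, hdiv⟩ := hne
  refine le_csInf ⟨_, J, hJ.1, hJ.2, fun v => congrFun hdiv v, rfl⟩ ?_
  rintro _ ⟨K, hanti, hsupp, hdivK, rfl⟩
  exact h K ⟨hanti, hsupp⟩ (funext hdivK)

theorem Cunbsg_le_flowCost_add (hlam : 0 ≤ lam) (hJ : J ∈ G.flows)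
    (hdiv : divergence J = y - x + z) : Cunbsg G lam x y ≤ flowCost J + lam * ∑ v, |z v| :=
  csInf_le ⟨0, by
      rintro _ ⟨K, z', -, -, -, rfl⟩
      exact add_nonneg (flowCost_nonneg K) (by positivity)⟩
    ⟨J, z, hJ.1, hJ.2, fun v => congrFun hdiv v, rfl⟩

theorem le_Cunbsg {a : ℝ} (hne : ∃ J ∈ G.flows, ∃ z, divergence J = y - x + z)
    (h : ∀ J ∈ G.flows, ∀ z, divergence J = y - x + z → a ≤ flowCost J + lam * ∑ v, |z v|) :
    a ≤ Cunbsg G lam x y := by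
  obtain ⟨J, hJ, z, hdiv⟩ := hne
  refine le_csInf ⟨_, J, z, hJ.1, hJ.2, fun v => congrFun hdiv v, rfl⟩ ?_
  rintro _ ⟨K, z', hanti, hsupp, hdivK, rfl⟩
  exact h K ⟨hanti, hsupp⟩ z' (funext hdivK)

variable [DecidableEq α]

theorem divergence_dartFlow (u v : α) :
    divergence (dartFlow u v) = Pi.single v 1 - Pi.single u 1 := by
  ext t
  simp [dartFlow, sum_sub_distrib, ite_and, Pi.single_apply]

theorem flowCost_dartFlow_le (u v : α) : flowCost (dartFlow u v) ≤ 1 := by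
  have h : ∀ r s : α, |dartFlow u v r s| ≤
      (if r = u ∧ s = v then 1 else 0) + (if r = v ∧ s = u then 1 else 0) := by
    intro r s
    refine (abs_sub _ _).trans ?_
    gcongr <;> split <;> simp
  calc flowCost (dartFlow u v)
      ≤ (1 / 2) * ∑ r, ∑ s,
          ((if r = u ∧ s = v then (1 : ℝ) else 0) + (if r = v ∧ s = u then 1 else 0)) := by
        unfold flowCost; gcongr with r _ s _; exact h r s
    _ = 1 := by simp [sum_add_distrib, ite_and]; norm_num

theorem SimpleGraph.Walk.divergence_flow {a b : α} (p : G.Walk a b) :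
    divergence p.flow = Pi.single b 1 - Pi.single a 1 := by
  induction p with
  | nil => simp [flow]
  | cons h p ih =>
    rw [flow, map_add, ih, divergence_dartFlow]
    abel

theorem SimpleGraph.Walk.flowCost_flow_le {a b : α} (p : G.Walk a b) :
    flowCost p.flow ≤ p.length := by
  induction p with
  | nil => simp [flow, flowCost]
  | @cons u v _ _ p ih =>
    rw [flow, length_cons, Nat.cast_succ]
    linarith [flowCost_add_le (dartFlow u v) p.flow, flowCost_dartFlow_le u v]

theorem SimpleGraph.Preconnected.exists_flow_of_coupling (hG : G.Preconnected)
    (c : α → α → ℝ) (hc : ∀ a b, 0 ≤ c a b) :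
    ∃ K ∈ G.flows, (∀ t, divergence K t = ∑ a, c a t - ∑ b, c t b) ∧
      flowCost K ≤ ∑ a, ∑ b, c a b * G.dist a b := by
  choose p hp using fun a b => (hG a b).exists_walk_length_eq_dist
  refine ⟨∑ a, ∑ b, c a b • (p a b).flow,
    sum_mem fun a _ => sum_mem fun b _ => Submodule.smul_mem _ _ (p a b).flow_mem_flows,
    fun t => ?_, ?_⟩
  · simp only [map_sum, map_smul, Walk.divergence_flow]
    simp [Finset.sum_apply, Pi.single_apply, mul_sub, sum_sub_distrib]
  · calc flowCost (∑ a, ∑ b, c a b • (p a b).flow)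
        ≤ ∑ a, ∑ b, flowCost (c a b • (p a b).flow) :=
          (flowCost_sum_le _ _).trans (sum_le_sum fun a _ => flowCost_sum_le _ _)
      _ ≤ ∑ a, ∑ b, c a b * G.dist a b := by
          gcongr with a _ b _
          rw [flowCost_smul, abs_of_nonneg (hc a b), ← hp a b]
          exact mul_le_mul_of_nonneg_left (p a b).flowCost_flow_le (hc a b)

theorem SimpleGraph.Connected.exists_flow_divergence_eq (hG : G.Connected) {z : α → ℝ}
    (hz : ∑ v, z v = 0) :
    ∃ K ∈ G.flows, divergence K = z ∧ flowCost K ≤ G.diam / 2 * ∑ v, |z v| := by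
  obtain ⟨S, hSdef⟩ : ∃ S, ∑ v, (z v)⁺ = S := ⟨_, rfl⟩
  have hS : ∑ v, (z v)⁻ = S := by
    have : ∑ v, ((z v)⁺ - (z v)⁻) = 0 := by simpa only [posPart_sub_negPart] using hz
    rw [sum_sub_distrib] at this
    linarith
  have habs : ∑ v, |z v| = 2 * S := by
    simp_rw [← posPart_add_negPart]
    rw [sum_add_distrib, hS, hSdef]
    ring
  obtain hS0 | hSpos := (hSdef ▸ sum_nonneg fun v _ => posPart_nonneg (z v) : 0 ≤ S).eq_or_lt
  · have hz0 : z = 0 := funext fun v => abs_eq_zero.mp <|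
      (sum_eq_zero_iff_of_nonneg fun v _ => abs_nonneg (z v)).mp (by rw [habs, ← hS0]; ring)
        v (mem_univ v)
    exact ⟨0, zero_mem _, by simp [hz0], by simp [hz0, flowCost]⟩
  have : Nonempty α := hG.nonempty
  have hdiam : G.ediam ≠ ⊤ := G.connected_iff_ediam_ne_top.mp hG
  -- the product coupling of the deficit `z⁻` with the excess `z⁺`, each of total mass `S`
  obtain ⟨K, hK, hdiv, hcost⟩ := hG.preconnected.exists_flow_of_coupling
    (fun a b => (z a)⁻ * (z b)⁺ / S) fun a b => by positivity
  refine ⟨K, hK, funext fun t => ?_, hcost.trans ?_⟩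
  · rw [hdiv, ← sum_div, ← sum_mul, hS, ← sum_div, ← mul_sum, hSdef,
      mul_div_cancel_left₀ _ hSpos.ne', mul_div_cancel_right₀ _ hSpos.ne']
    exact posPart_sub_negPart (z t)
  · calc ∑ a, ∑ b, (z a)⁻ * (z b)⁺ / S * G.dist a b
        ≤ ∑ a, ∑ b, (z a)⁻ * (z b)⁺ / S * G.diam := by
          gcongr
          exact_mod_cast dist_le_diam hdiam
      _ = (∑ a, (z a)⁻) * (∑ b, (z b)⁺) / S * G.diam := by
          simp_rw [sum_mul_sum, sum_div, sum_mul]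
      _ = G.diam / 2 * ∑ v, |z v| := by
          rw [hS, hSdef, habs]
          field_simp

theorem W1sg_le_flowCost_add (hG : G.Connected) (hbal : ∑ v, x v = ∑ v, y v)
    (hlam : G.diam / 2 ≤ lam) (hJ : J ∈ G.flows) (hdiv : divergence J = y - x + z) :
    W1sg G x y ≤ flowCost J + lam * ∑ v, |z v| := by
  have hz : ∑ v, (-z) v = 0 := by
    have htotal := sum_divergence_eq_zero hJ.1
    simp only [hdiv, Pi.add_apply, Pi.sub_apply, sum_add_distrib, sum_sub_distrib, hbal, sub_self,
      zero_add] at htotal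
    simp [htotal]
  obtain ⟨K, hK, hdivK, hcostK⟩ := hG.exists_flow_divergence_eq hz
  calc W1sg G x y ≤ flowCost (J + K) :=
        W1sg_le_flowCost (add_mem hJ hK) (by rw [map_add, hdiv, hdivK]; abel)
    _ ≤ flowCost J + flowCost K := flowCost_add_le J K
    _ ≤ flowCost J + lam * ∑ v, |z v| := by
        simp only [Pi.neg_apply, abs_neg] at hcostK
        gcongr
        exact hcostK.trans (by gcongr)

end Fintype

end Flows

theorem Cunb_eq_W1_of_large_lambda_general (G : SimpleGraph V)
    (hconn : G.Connected) (lam : ℝ) (hlam : (G.diam : ℝ) / 2 ≤ lam)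
    (x y : V → ℝ) (hx : IsProb x) (hy : IsProb y) :
    Cunbsg G lam x y = W1sg G x y := by
  have hbal : ∑ v, x v = ∑ v, y v := hx.2.trans hy.2.symm
  obtain ⟨J₀, hJ₀, hdiv₀, -⟩ :=
    hconn.exists_flow_divergence_eq (z := y - x) (by simp [sum_sub_distrib, hbal])
  have hlam0 : 0 ≤ lam := (by positivity : (0 : ℝ) ≤ G.diam / 2).trans hlam
  apply le_antisymm
  · refine le_W1sg ⟨J₀, hJ₀, hdiv₀⟩ fun J hJ hdiv => ?_
    simpa using Cunbsg_le_flowCost_add hlam0 hJ (z := 0) (by simpa using hdiv)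
  · exact le_Cunbsg ⟨J₀, hJ₀, 0, by simpa using hdiv₀⟩ fun J hJ z hdiv =>
      W1sg_le_flowCost_add hconn hbal hlam hJ hdiv

/-- For balanced (probability) distributions on a connected graph, the
unbalanced cost with `p = 1` coincides with the Wasserstein distance as soon
as `λ ≥ diam(G)/2`. -/
theorem Cunb_eq_W1_of_large_lambda (G : SimpleGraph V) [DecidableRel G.Adj]
    (hconn : G.Connected) (lam : ℝ) (hlam : (G.diam : ℝ) / 2 ≤ lam)
    (x y : V → ℝ) (hx : IsProb x) (hy : IsProb y) :
    Cunbsg G lam x y = W1sg G x y :=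
  Cunb_eq_W1_of_large_lambda_general G hconn lam hlam x y hx hy
end
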